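/- arXiv:2506.09689 — 4 statements merged into one kernel-verified Lean document; each statement's English description precedes it below -/
import Mathlib

section
/- Let H be an r×n matrix over F_2, let s ∈ F_2^r, and let i* ∈ {1,…,n}. Let h_{i*} denote the i*-th column of H and let s' = s ⊕ h_{i*}. Then for every ℓ ∈ {1,…,n}, the counter with respect to the updated syndrome satisfies σ_ℓ(s') = σ_ℓ(s) + Σ_{j : h_{j,i*}=1 ∧ h_{j,ℓ}=1} (1 − 2·s_j), where the sum is taken over the integers and each syndrome bit s_j ∈ {0,1} is read as an integer. -/
open Finset

/-- incremental counter update after flipping bit `i*`.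
For `σ_ℓ(s) = |{j : H j ℓ = 1 ∧ s j = 1}|` and `s' = s ⊕ h_{i*}`, we have
`σ_ℓ(s') = σ_ℓ(s) + Σ_{j : H j i* = 1 ∧ H j ℓ = 1} (1 − 2 s_j)` over ℤ. -/
theorem bfmax_counter_update (r n : ℕ) (H : Matrix (Fin r) (Fin n) (ZMod 2))
    (s : Fin r → ZMod 2) (istar : Fin n) (l : Fin n) :
    (((univ.filter (fun j : Fin r => H j l = 1 ∧ (s j + H j istar) = 1)).card : ℤ))
      = ((univ.filter (fun j : Fin r => H j l = 1 ∧ s j = 1)).card : ℤ)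
        + ∑ j ∈ univ.filter (fun j : Fin r => H j istar = 1 ∧ H j l = 1),
            (1 - 2 * ((s j).val : ℤ)) := by
  simp only [Finset.card_filter, Finset.sum_filter]
  push_cast
  rw [← Finset.sum_add_distrib]
  apply Finset.sum_congr rfl
  intro j _
  generalize s j = a
  generalize H j l = b
  generalize H j istar = c
  revert a b c
  decide
end

section
/- Let n, u, w ≥ 1, let i ∈ {1,…,n}, and fix e ∈ F_2^n with Hamming weight wt(e) = u and e_i = 1. Then the number of vectors h ∈ F_2^n with wt(h) = w, h_i = 1, and ⟨h,e⟩ = 1 over F_2 equals Σ_{ℓ even, 0 ≤ ℓ ≤ min(w−1, u−1)} C(u−1, ℓ)·C(n−u, w−1−ℓ). -/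
/-!
Identify `h` with its support `S`. Over `F₂`, `⟨h, e⟩` is the parity of `|S ∩ supp e|`. Since
`i ∈ S ∩ supp e`, removing `i` leaves `w - 1` positions of `S`, of which `ℓ` lie in
`supp e ∖ {i}` (a set of size `u - 1`) and `w - 1 - ℓ` outside `supp e` (a set of size `n - u`);
the check is unsatisfied exactly when `ℓ + 1` is odd, and sorting by `ℓ` gives a truncated
Vandermonde sum over even `ℓ`.
-/

open Finset

section FunZModTwo

variable {ι : Type*} [Fintype ι] [DecidableEq ι]

lemma ZMod.two_ne_zero_iff_eq_one (a : ZMod 2) : a ≠ 0 ↔ a = 1 := by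
  revert a; decide

def funZModTwoEquivFinset : (ι → ZMod 2) ≃ Finset ι where
  toFun h := {j | h j ≠ 0}
  invFun S j := if j ∈ S then 1 else 0
  left_inv h := by
    funext j
    by_cases hj : h j = 0 <;> simp_all [ZMod.two_ne_zero_iff_eq_one]
  right_inv S := by
    ext j
    by_cases hj : j ∈ S <;> simp [hj]

lemma sum_mul_eq_card_support_inter (h e : ι → ZMod 2) :
    ∑ j, h j * e j = #(({j | h j ≠ 0} : Finset ι) ∩ ({j | e j ≠ 0} : Finset ι)) := by
  have hmul : ∀ a b : ZMod 2, a * b = if a ≠ 0 ∧ b ≠ 0 then 1 else 0 := by decide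
  simp only [hmul, sum_boole, filter_and]

end FunZModTwo

section PowersetCard

variable {α : Type*} [DecidableEq α]

lemma card_insert_inter_of_mem {i : α} {T E : Finset α} (hiE : i ∈ E) (hiT : i ∉ T) :
    #(insert i T ∩ E) = #(T ∩ E.erase i) + 1 := by
  have hiTE : i ∉ T ∩ E := fun h => hiT (mem_inter.1 h).1
  rw [insert_inter_of_mem hiE, inter_erase, erase_eq_of_notMem hiTE, card_insert_of_notMem hiTE]

lemma card_filter_powersetCard_succ_insert {i : α} {U : Finset α} (hi : i ∉ U) (k : ℕ)
    (p : Finset α → Prop) [DecidablePred p] :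
    #{S ∈ powersetCard (k + 1) (insert i U) | i ∈ S ∧ p S} =
      #{T ∈ powersetCard k U | p (insert i T)} := by
  have hU : {S ∈ powersetCard (k + 1) U | i ∈ S ∧ p S} = ∅ :=
    filter_eq_empty_iff.2 fun S hS hiS => hi ((mem_powersetCard.1 hS).1 hiS.1)
  rw [powersetCard_succ_insert hi, filter_union, hU, empty_union, filter_image,
    card_image_of_injOn]
  · simp only [mem_insert_self, true_and]
  · intro T hT T' hT' hTT'
    simp only [coe_filter, mem_powersetCard] at hT hT'
    rw [← erase_insert fun h => hi (hT.1.1 h), hTT', erase_insert fun h => hi (hT'.1.1 h)]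

lemma card_filter_powersetCard_card_inter_eq {A B : Finset α} (hAB : Disjoint A B) {k l : ℕ}
    (hl : l ≤ k) :
    #{T ∈ powersetCard k (A ∪ B) | #(T ∩ A) = l} = (#A).choose l * (#B).choose (k - l) := by
  have hsplit {T : Finset α} (hT : T ⊆ A ∪ B) : T ∩ A ∪ T ∩ B = T := by
    rw [← inter_union_distrib_left, inter_eq_left.2 hT]
  have hrestrict {P Q : Finset α} (hP : P ⊆ A) (hQ : Q ⊆ B) :
      (P ∪ Q) ∩ A = P ∧ (P ∪ Q) ∩ B = Q := by
    grind [disjoint_left]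
  rw [← card_powersetCard l A, ← card_powersetCard (k - l) B, ← card_product]
  refine (card_nbij' (fun P => P.1 ∪ P.2) (fun T => (T ∩ A, T ∩ B)) ?_ ?_ ?_ ?_).symm
  · rintro ⟨P, Q⟩ hPQ
    simp only [coe_product, Set.mem_prod, mem_coe, mem_powersetCard] at hPQ
    obtain ⟨⟨hPA, hP⟩, hQB, hQ⟩ := hPQ
    simp only [coe_filter, mem_powersetCard, Set.mem_ofPred_eq, (hrestrict hPA hQB).1]
    refine ⟨⟨union_subset_union hPA hQB, ?_⟩, hP⟩
    rw [card_union_of_disjoint (hAB.mono hPA hQB), hP, hQ]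
    omega
  · intro T hT
    simp only [coe_filter, mem_powersetCard, Set.mem_ofPred_eq] at hT
    obtain ⟨⟨hTAB, hT⟩, hTA⟩ := hT
    simp only [coe_product, Set.mem_prod, mem_coe, mem_powersetCard]
    refine ⟨⟨inter_subset_right, hTA⟩, inter_subset_right, ?_⟩
    rw [← hsplit hTAB, card_union_of_disjoint (hAB.mono inter_subset_right inter_subset_right)]
      at hT
    omega
  · rintro ⟨P, Q⟩ hPQ
    simp only [coe_product, Set.mem_prod, mem_coe, mem_powersetCard] at hPQ
    exact Prod.ext (hrestrict hPQ.1.1 hPQ.2.1).1 (hrestrict hPQ.1.1 hPQ.2.1).2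
  · intro T hT
    exact hsplit (mem_powersetCard.1 (mem_filter.1 hT).1).1

lemma card_filter_powersetCard_even_card_inter {A B : Finset α} (hAB : Disjoint A B) (k : ℕ) :
    #{T ∈ powersetCard k (A ∪ B) | Even #(T ∩ A)} =
      ∑ l ∈ range (min k #A + 1), if Even l then (#A).choose l * (#B).choose (k - l) else 0 := by
  have hmaps : ∀ T ∈ {T ∈ powersetCard k (A ∪ B) | Even #(T ∩ A)},
      #(T ∩ A) ∈ range (min k #A + 1) := by
    intro T hT
    rw [mem_filter, mem_powersetCard] at hT
    rw [mem_range, Nat.lt_succ_iff, le_min_iff, ← hT.1.2]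
    exact ⟨card_le_card inter_subset_left, card_le_card inter_subset_right⟩
  rw [card_eq_sum_card_fiberwise hmaps]
  refine sum_congr rfl fun l hl => ?_
  rw [filter_filter]
  split_ifs with hl_even
  · rw [← card_filter_powersetCard_card_inter_eq hAB (by simp at hl; omega)]
    exact congrArg card (filter_congr fun T _ => ⟨And.right, fun h => ⟨h ▸ hl_even, h⟩⟩)
  · rw [card_eq_zero, filter_eq_empty_iff]
    rintro T - ⟨hT, rfl⟩
    exact hl_even hT

end PowersetCard

theorem unsatisfied_check_count_error_bit_general (n u w : ℕ)
    (hw : 1 ≤ w)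
    (i : Fin n) (e : Fin n → ZMod 2)
    (hewt : (univ.filter (fun j : Fin n => e j ≠ 0)).card = u)
    (hei : e i = 1) :
    (univ.filter (fun h : Fin n → ZMod 2 =>
        (univ.filter (fun j : Fin n => h j ≠ 0)).card = w ∧ h i = 1 ∧
          ∑ j : Fin n, h j * e j = 1)).card
      = ∑ l ∈ Finset.range (min (w - 1) (u - 1) + 1),
          if Even l then Nat.choose (u - 1) l * Nat.choose (n - u) (w - 1 - l) else 0 := by
  set E : Finset (Fin n) := {j | e j ≠ 0}
  have hiE : i ∈ E := by simp [E, hei]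
  have hAB : Disjoint (E.erase i) (univ \ E) := disjoint_sdiff.mono_left (erase_subset i E)
  have hiAB : i ∉ E.erase i ∪ univ \ E := by simp [hiE]
  have huniv : univ = insert i (E.erase i ∪ univ \ E) := by grind
  obtain ⟨k, rfl⟩ : ∃ k, w = k + 1 := ⟨w - 1, by omega⟩
  calc _ = #{S ∈ powersetCard (k + 1) univ | i ∈ S ∧ Odd #(S ∩ E)} :=
        card_equiv funZModTwoEquivFinset fun h => by
          simp [funZModTwoEquivFinset, sum_mul_eq_card_support_inter,
            ZMod.natCast_eq_one_iff_odd, ZMod.two_ne_zero_iff_eq_one, E]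
    _ = #{T ∈ powersetCard k (E.erase i ∪ univ \ E) | Even #(T ∩ E.erase i)} := by
        conv_lhs => rw [huniv]
        rw [card_filter_powersetCard_succ_insert hiAB]
        refine congrArg card (filter_congr fun T hT => ?_)
        have hiT : i ∉ T := fun hiT => hiAB ((mem_powersetCard.1 hT).1 hiT)
        rw [card_insert_inter_of_mem hiE hiT, Nat.odd_add_one, Nat.not_odd_iff_even]
    _ = _ := by
        rw [card_filter_powersetCard_even_card_inter hAB, card_erase_of_mem hiE, card_univ_sdiff,
          Fintype.card_fin, hewt]
        simp

/-- for `e ∈ F₂ⁿ` with `wt(e) = u` and `e i = 1`, the number of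
`h ∈ F₂ⁿ` with `wt(h) = w`, `h i = 1` and `⟨h,e⟩ = 1` equals
`Σ_{ℓ even, 0 ≤ ℓ ≤ min(w−1,u−1)} C(u−1,ℓ)·C(n−u,w−1−ℓ)`. -/
theorem unsatisfied_check_count_error_bit (n u w : ℕ)
    (hn : 1 ≤ n) (hu : 1 ≤ u) (hw : 1 ≤ w)
    (i : Fin n) (e : Fin n → ZMod 2)
    (hewt : (univ.filter (fun j : Fin n => e j ≠ 0)).card = u)
    (hei : e i = 1) :
    (univ.filter (fun h : Fin n → ZMod 2 =>
        (univ.filter (fun j : Fin n => h j ≠ 0)).card = w ∧ h i = 1 ∧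
          ∑ j : Fin n, h j * e j = 1)).card
      = ∑ l ∈ Finset.range (min (w - 1) (u - 1) + 1),
          if Even l then Nat.choose (u - 1) l * Nat.choose (n - u) (w - 1 - l) else 0 :=
  unsatisfied_check_count_error_bit_general n u w hw i e hewt hei
end

section
/- Let n ≥ 1, u ≥ 0, w ≥ 1, let i ∈ {1,…,n}, and fix e ∈ F_2^n with Hamming weight wt(e) = u and e_i = 0. Then the number of vectors h ∈ F_2^n with wt(h) = w, h_i = 1, and ⟨h,e⟩ = 1 over F_2 equals Σ_{ℓ odd, 1 ≤ ℓ ≤ min(w−1, u)} C(u, ℓ)·C(n−1−u, w−1−ℓ). -/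
/-!
Identify `h ∈ F₂ⁿ` with its support `S`: then `wt h = |S|` and `⟨h, e⟩` is the parity of
`|S ∩ supp e|`. As `i ∉ supp e`, removing `i` from `S` leaves a `(w - 1)`-subset `T` of the other
`n - 1` coordinates with `|T ∩ supp e|` odd, and the `T` with `|T ∩ supp e| = ℓ` are the unions of
an `ℓ`-subset of `supp e` (of size `u`) and a `(w - 1 - ℓ)`-subset of its complement
(of size `n - 1 - u`).
-/

open Finset

namespace Finset

variable {α : Type*} [DecidableEq α]

theorem card_filter_powersetCard_card_inter_eq {E U : Finset α} (hEU : E ⊆ U) {k l : ℕ}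
    (hlk : l ≤ k) :
    #{T ∈ U.powersetCard k | #(T ∩ E) = l} = (#E).choose l * (#U - #E).choose (k - l) := by
  rw [← card_sdiff_of_subset hEU, ← card_powersetCard l E, ← card_powersetCard (k - l),
    ← card_product]
  refine card_nbij' (fun T => (T ∩ E, T \ E)) (fun p => p.1 ∪ p.2) ?_ ?_ ?_ ?_
  · intro T hT
    simp only [mem_coe, mem_filter, mem_product, mem_powersetCard] at hT ⊢
    refine ⟨⟨inter_subset_right, hT.2⟩, sdiff_subset_sdiff hT.1.1 le_rfl, ?_⟩
    have := card_inter_add_card_sdiff T E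
    omega
  · rintro ⟨A, B⟩ hAB
    simp only [mem_coe, mem_filter, mem_product, mem_powersetCard] at hAB ⊢
    obtain ⟨⟨hAE, hA⟩, hBU, hB⟩ := hAB
    have hBE : Disjoint B E := disjoint_of_subset_left hBU disjoint_sdiff_self_left
    have hAB : Disjoint A B := disjoint_of_subset_left hAE hBE.symm
    refine ⟨⟨union_subset (hAE.trans hEU) (hBU.trans sdiff_subset), ?_⟩, ?_⟩
    · rw [card_union_of_disjoint hAB]; omega
    · rw [union_inter_distrib_right, inter_eq_left.2 hAE, disjoint_iff_inter_eq_empty.1 hBE,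
        union_empty, hA]
  · intro T _
    exact sup_inf_sdiff T E
  · rintro ⟨A, B⟩ hAB
    simp only [mem_coe, mem_product, mem_powersetCard] at hAB
    obtain ⟨⟨hAE, -⟩, hBU, -⟩ := hAB
    have hBE : Disjoint B E := disjoint_of_subset_left hBU disjoint_sdiff_self_left
    change ((A ∪ B) ∩ E, (A ∪ B) \ E) = (A, B)
    rw [union_inter_distrib_right, inter_eq_left.2 hAE, disjoint_iff_inter_eq_empty.1 hBE,
      union_sdiff_distrib, sdiff_eq_empty_iff_subset.2 hAE, sdiff_eq_self_of_disjoint hBE,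
      union_empty, empty_union]

theorem card_filter_powersetCard_card_inter {E U : Finset α} (hEU : E ⊆ U) (k : ℕ)
    (P : ℕ → Prop) [DecidablePred P] :
    #{T ∈ U.powersetCard k | P #(T ∩ E)} =
      ∑ l ∈ range (min k #E + 1), if P l then (#E).choose l * (#U - #E).choose (k - l) else 0 := by
  have hmaps : ∀ T ∈ {T ∈ U.powersetCard k | P #(T ∩ E)}, #(T ∩ E) ∈ range (min k #E + 1) := by
    intro T hT
    rw [mem_filter, mem_powersetCard] at hT
    have hT : #(T ∩ E) ≤ #T := card_le_card inter_subset_left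
    have hE : #(T ∩ E) ≤ #E := card_le_card inter_subset_right
    rw [mem_range]; omega
  rw [card_eq_sum_card_fiberwise hmaps]
  refine sum_congr rfl fun l hl => ?_
  split_ifs with hP
  · rw [filter_filter, ← card_filter_powersetCard_card_inter_eq hEU (by simp at hl; omega)]
    exact congrArg card (filter_congr fun T _ => and_iff_right_of_imp fun h => h ▸ hP)
  · rw [card_eq_zero, filter_eq_empty_iff]
    rintro T hT rfl
    exact hP (mem_filter.1 hT).2

theorem card_filter_mem_eq_card_powersetCard_erase [Fintype α] {E : Finset α} {i : α}
    (hi : i ∉ E) (k : ℕ) (P : ℕ → Prop) [DecidablePred P] :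
    #{S : Finset α | #S = k + 1 ∧ i ∈ S ∧ P #(S ∩ E)} =
      #{T ∈ (univ.erase i).powersetCard k | P #(T ∩ E)} := by
  symm
  refine card_nbij' (insert i) (erase · i) ?_ ?_ ?_ ?_
  · intro T hT
    simp only [mem_coe, mem_filter, mem_powersetCard, mem_univ, true_and] at hT ⊢
    obtain ⟨⟨hTi, hT⟩, hP⟩ := hT
    have hiT : i ∉ T := fun h => by simpa using hTi h
    rw [card_insert_of_notMem hiT, insert_inter_of_notMem hi]
    exact ⟨by omega, mem_insert_self i T, hP⟩
  · intro S hS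
    simp only [mem_coe, mem_filter, mem_powersetCard, mem_univ, true_and] at hS ⊢
    obtain ⟨hS, hiS, hP⟩ := hS
    rw [erase_inter, erase_eq_of_notMem (fun h => hi (mem_inter.1 h).2), card_erase_of_mem hiS]
    exact ⟨⟨erase_subset_erase i (subset_univ S), by omega⟩, hP⟩
  · intro T hT
    simp only [mem_coe, mem_filter, mem_powersetCard] at hT
    exact erase_insert fun h => by simpa using hT.1.1 h
  · intro S hS
    simp only [mem_coe, mem_filter, mem_univ, true_and] at hS
    exact insert_erase hS.2.1

end Finset

namespace ZMod

theorem ne_zero_iff_eq_one (x : ZMod 2) : x ≠ 0 ↔ x = 1 := by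
  revert x; decide

variable {ι : Type*} [Fintype ι] [DecidableEq ι]

def binaryVecEquivFinset : (ι → ZMod 2) ≃ Finset ι where
  toFun h := {j | h j ≠ 0}
  invFun S j := if j ∈ S then 1 else 0
  left_inv h := by
    funext j
    have : ∀ x : ZMod 2, (if x ≠ 0 then 1 else 0) = x := by decide
    simpa using this (h j)
  right_inv S := by ext j; by_cases hj : j ∈ S <;> simp [hj]

theorem sum_mul_eq_card_inter (h e : ι → ZMod 2) :
    ∑ j, h j * e j = (#(({j | h j ≠ 0} : Finset ι) ∩ ({j | e j ≠ 0} : Finset ι)) : ZMod 2) := by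
  rw [← filter_and, natCast_card_filter]
  refine sum_congr rfl fun j _ => ?_
  generalize h j = x; generalize e j = y
  revert x y; decide

end ZMod

theorem unsatisfied_check_count_error_free_bit_general (n u w : ℕ)
    (hw : 1 ≤ w)
    (i : Fin n) (e : Fin n → ZMod 2)
    (hewt : (univ.filter (fun j : Fin n => e j ≠ 0)).card = u)
    (hei : e i = 0) :
    (univ.filter (fun h : Fin n → ZMod 2 =>
        (univ.filter (fun j : Fin n => h j ≠ 0)).card = w ∧ h i = 1 ∧
          ∑ j : Fin n, h j * e j = 1)).card
      = ∑ l ∈ Finset.range (min (w - 1) u + 1),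
          if Odd l then Nat.choose u l * Nat.choose (n - 1 - u) (w - 1 - l) else 0 := by
  set E : Finset (Fin n) := {j | e j ≠ 0}
  have hiE : i ∉ E := by simp [E, hei]
  calc _ = #{S : Finset (Fin n) | #S = w - 1 + 1 ∧ i ∈ S ∧ Odd #(S ∩ E)} := by
        refine card_equiv ZMod.binaryVecEquivFinset fun h => ?_
        simp only [mem_filter, mem_univ, true_and]
        rw [ZMod.sum_mul_eq_card_inter, ZMod.natCast_eq_one_iff_odd, Nat.sub_add_cancel hw]
        simp [ZMod.binaryVecEquivFinset, ZMod.ne_zero_iff_eq_one, E]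
    _ = #{T ∈ (univ.erase i).powersetCard (w - 1) | Odd #(T ∩ E)} :=
        card_filter_mem_eq_card_powersetCard_erase hiE (w - 1) Odd
    _ = _ := by
        rw [card_filter_powersetCard_card_inter (subset_erase.2 ⟨subset_univ E, hiE⟩),
          card_erase_of_mem (mem_univ i), card_univ, Fintype.card_fin, hewt]

/-- for `e ∈ F₂ⁿ` with `wt(e) = u` and `e i = 0`, the number of
`h ∈ F₂ⁿ` with `wt(h) = w`, `h i = 1` and `⟨h,e⟩ = 1` equals
`Σ_{ℓ odd, 1 ≤ ℓ ≤ min(w−1,u)} C(u,ℓ)·C(n−1−u,w−1−ℓ)`. -/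
theorem unsatisfied_check_count_error_free_bit (n u w : ℕ)
    (hn : 1 ≤ n) (hw : 1 ≤ w)
    (i : Fin n) (e : Fin n → ZMod 2)
    (hewt : (univ.filter (fun j : Fin n => e j ≠ 0)).card = u)
    (hei : e i = 0) :
    (univ.filter (fun h : Fin n → ZMod 2 =>
        (univ.filter (fun j : Fin n => h j ≠ 0)).card = w ∧ h i = 1 ∧
          ∑ j : Fin n, h j * e j = 1)).card
      = ∑ l ∈ Finset.range (min (w - 1) u + 1),
          if Odd l then Nat.choose u l * Nat.choose (n - 1 - u) (w - 1 - l) else 0 :=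
  unsatisfied_check_count_error_free_bit_general n u w hw i e hewt hei
end

section
/- Let t, v ≥ 1 and n > t, and for each u ∈ {1,…,t} let 0 ≤ ρ_1(u), ρ_0(u) ≤ 1. Let {X^{(u)}_j : 1 ≤ u ≤ t, 1 ≤ j ≤ u} ∪ {Y^{(u)}_k : 1 ≤ u ≤ t, 1 ≤ k ≤ n−u} be a mutually independent family of random variables taking values in {0,…,v}, with P(X^{(u)}_j = z) = g_1^{(u)}(z) = C(v,z)·ρ_1(u)^z·(1−ρ_1(u))^{v−z} and P(Y^{(u)}_k = z) = g_0^{(u)}(z) = C(v,z)·ρ_0(u)^z·(1−ρ_0(u))^{v−z}. Then the probability of the event 'for every u ∈ {1,…,t}, max_k Y^{(u)}_k < max_j X^{(u)}_j' equals ∏_{u=1}^{t} Σ_{x=0}^{v−1} f_1^{(u)}(x)·f_0^{(u)}(x), where f_1^{(u)}(x) = 1 − (Σ_{z=0}^{x} g_1^{(u)}(z))^u, f_0^{(u)}(0) = (g_0^{(u)}(0))^{n−u}, and f_0^{(u)}(x) = (Σ_{z=0}^{x} g_0^{(u)}(z))^{n−u} − (Σ_{z=0}^{x−1} g_0^{(u)}(z))^{n−u}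 for x ≥ 1. Consequently, the probability of the complementary (failure) event equals 1 − ∏_{u=1}^{t} Σ_{x=0}^{v−1} f_1^{(u)}(x)·f_0^{(u)}(x). -/
/-!
Distinct iterations are independent, so the success probability is the product over `u` of
`P(S < T)`, where `S` is the largest error-free counter and `T` the largest erroneous counter of
iteration `u`. These two maxima are independent, and `T ≤ v`, so
`P(S < T) = ∑_{x < v} P(S = x) P(x < T)`. The CDF of the maximum of `m` i.i.d. counters is the
`m`-th power of the common CDF: this gives `P(x < T) = f₁(x)`, and the point masses
`P(S = x) = f₀(x)` as differences of consecutive CDF values.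
-/

open MeasureTheory ProbabilityTheory

universe u

namespace ProbabilityTheory

variable {Ω : Type*} {mΩ : MeasurableSpace Ω} {μ : Measure Ω}

lemma iIndepFun.iIndepFun_curry {ι : Type*} {κ : ι → Type*} {𝓧 : (i : ι) → κ i → Type*}
    [∀ i j, MeasurableSpace (𝓧 i j)] {X : (i : ι) → (j : κ i) → Ω → 𝓧 i j}
    (mX : ∀ i j, Measurable (X i j)) (h : iIndepFun (fun p : Σ i, κ i => X p.1 p.2) μ) :
    iIndepFun (fun i ω j => X i j ω) μ := by
  have := h.isProbabilityMeasure
  have _ i j := Measure.isProbabilityMeasure_map (μ := μ) (mX i j).aemeasurable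
  have hcurry : MeasurableEquiv.piCurry 𝓧 ∘ (fun ω (p : Σ i, κ i) => X p.1 p.2 ω)
      = fun ω i j => X i j ω := by
    ext; simp [Sigma.curry]
  rw [iIndepFun_iff_map_fun_eq_infinitePi_map (by fun_prop), ← hcurry,
    ← Measure.map_map (by fun_prop) (by fun_prop),
    h.map_fun_eq_infinitePi_map (fun p => mX p.1 p.2),
    Measure.infinitePi_map_piCurry (fun i j ↦ μ.map (X i j))]
  congrm Measure.infinitePi fun i ↦ ?_
  exact ((h.precomp sigma_mk_injective).map_fun_eq_infinitePi_map (mX i)).symm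

lemma iIndepFun.indepFun_sumElim {ι κ : Type u} {β : Type*} [MeasurableSpace β]
    {f : ι → Ω → β} {g : κ → Ω → β} (hf : ∀ i, Measurable (f i)) (hg : ∀ k, Measurable (g k))
    (h : iIndepFun (Sum.elim f g) μ) :
    IndepFun (fun ω i => f i ω) (fun ω k => g k ω) μ := by
  -- `ι ⊕ κ` as the sigma type over `Bool` with blocks `κ` and `ι`
  have hσ := (h.precomp (Equiv.sumEquivSigmaBool ι κ).symm.injective).iIndepFun_curry
    (X := fun b j => Sum.elim f g ((Equiv.sumEquivSigmaBool ι κ).symm ⟨b, j⟩))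
    (by rintro (_ | _) j <;> simp [Equiv.sumEquivSigmaBool, hf, hg])
  exact hσ.indepFun Bool.false_ne_true

lemma iIndepFun.measure_setOf_forall {ι : Type*} [Fintype ι] {β : ι → Type*}
    {mβ : ∀ i, MeasurableSpace (β i)} {B : ∀ i, Ω → β i} (h : iIndepFun B μ)
    {P : ∀ i, β i → Prop} (hP : ∀ i, MeasurableSet {b | P i b}) :
    μ {ω | ∀ i, P i (B i ω)} = ∏ i, μ {ω | P i (B i ω)} := by
  rw [Set.ofPred_forall]
  exact h.meas_iInter fun i => comap_measurable (B i) (hP i)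

lemma measurable_finset_univ_sup {ι : Type*} [Fintype ι] {W : ι → Ω → ℕ}
    (hW : ∀ j, Measurable (W j)) :
    Measurable fun ω => Finset.univ.sup (W · ω) :=
  (measurable_of_countable fun g : ι → ℕ => Finset.univ.sup g).comp (measurable_pi_lambda _ hW)

section NatValued

variable [IsFiniteMeasure μ]

lemma measureReal_le_eq_sum {V : Ω → ℕ} (hV : Measurable V) (x : ℕ) :
    μ.real {ω | V ω ≤ x} = ∑ z ∈ Finset.range (x + 1), μ.real {ω | V ω = z} := by
  calc μ.real {ω | V ω ≤ x} = μ.real (V ⁻¹' ↑(Finset.range (x + 1))) := by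
        congr 1; ext; simp
    _ = _ := (sum_measureReal_preimage_singleton _ fun z _ => hV (measurableSet_singleton z)).symm

lemma measureReal_eq_add_one {V : Ω → ℕ} (hV : Measurable V) (x : ℕ) :
    μ.real {ω | V ω = x + 1} = μ.real {ω | V ω ≤ x + 1} - μ.real {ω | V ω ≤ x} := by
  rw [measureReal_le_eq_sum hV (x + 1), measureReal_le_eq_sum hV x,
    Finset.sum_range_succ _ (x + 1)]
  ring

lemma IndepFun.measureReal_lt_eq_sum {S T : Ω → ℕ} (hS : Measurable S) (hT : Measurable T)
    (hST : IndepFun S T μ) {v : ℕ} (hTv : ∀ ω, T ω ≤ v) :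
    μ.real {ω | S ω < T ω}
      = ∑ x ∈ Finset.range v, μ.real {ω | S ω = x} * μ.real {ω | x < T ω} := by
  have hsplit : {ω | S ω < T ω} = ⋃ x ∈ Finset.range v, S ⁻¹' {x} ∩ T ⁻¹' Set.Ioi x := by
    ext ω
    simp only [Set.mem_ofPred_eq, Set.mem_iUnion, Set.mem_inter_iff, Set.mem_preimage,
      Set.mem_singleton_iff, Set.mem_Ioi, Finset.mem_range, exists_prop]
    exact ⟨fun h => ⟨S ω, h.trans_le (hTv ω), rfl, h⟩, fun ⟨x, _, hx, h⟩ => hx ▸ h⟩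
  have hdisj : Set.PairwiseDisjoint ↑(Finset.range v) fun x => S ⁻¹' {x} ∩ T ⁻¹' Set.Ioi x :=
    fun x _ y _ hxy => Set.disjoint_left.2 fun ω hx hy => hxy (hx.1.symm.trans hy.1)
  rw [hsplit, measureReal_biUnion_finset hdisj
    fun x _ => (hS (measurableSet_singleton x)).inter (hT measurableSet_Ioi)]
  refine Finset.sum_congr rfl fun x _ => ?_
  simp only [measureReal_def, hST.measure_inter_preimage_eq_mul _ _ (measurableSet_singleton x)
    measurableSet_Ioi, ENNReal.toReal_mul]
  rfl

end NatValued

section MaxOfIID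

variable {ι : Type*} [Fintype ι] {W : ι → Ω → ℕ} {G : ℕ → ℝ}

lemma iIndepFun.measure_sup_le_eq_prod (h : iIndepFun W μ) (x : ℕ) :
    μ {ω | Finset.univ.sup (W · ω) ≤ x} = ∏ j, μ {ω | W j ω ≤ x} := by
  have hset : {ω | Finset.univ.sup (W · ω) ≤ x} = ⋂ j ∈ Finset.univ, W j ⁻¹' Set.Iic x := by
    ext; simp
  rw [hset, h.measure_inter_preimage_eq_mul _ fun _ _ => measurableSet_Iic]
  rfl

lemma iIndepFun.measureReal_sup_le (hW : ∀ j, Measurable (W j)) (h : iIndepFun W μ)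
    (hG : ∀ j z, μ.real {ω | W j ω = z} = G z) (x : ℕ) :
    μ.real {ω | Finset.univ.sup (W · ω) ≤ x}
      = (∑ z ∈ Finset.range (x + 1), G z) ^ Fintype.card ι := by
  have := h.isProbabilityMeasure
  rw [measureReal_def, h.measure_sup_le_eq_prod, ENNReal.toReal_prod]
  simp [← measureReal_def, measureReal_le_eq_sum (hW _), hG]

lemma iIndepFun.measureReal_lt_sup (hW : ∀ j, Measurable (W j)) (h : iIndepFun W μ)
    (hG : ∀ j z, μ.real {ω | W j ω = z} = G z) (x : ℕ) :
    μ.real {ω | x < Finset.univ.sup (W · ω)}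
      = 1 - (∑ z ∈ Finset.range (x + 1), G z) ^ Fintype.card ι := by
  have := h.isProbabilityMeasure
  rw [← h.measureReal_sup_le hW hG, ← probReal_compl_eq_one_sub
    (measurableSet_le (measurable_finset_univ_sup hW) measurable_const)]
  congr 1; ext; simp

lemma iIndepFun.measureReal_sup_eq_zero (hW : ∀ j, Measurable (W j)) (h : iIndepFun W μ)
    (hG : ∀ j z, μ.real {ω | W j ω = z} = G z) :
    μ.real {ω | Finset.univ.sup (W · ω) = 0} = G 0 ^ Fintype.card ι := by
  simp_rw [← Nat.le_zero]
  rw [h.measureReal_sup_le hW hG, Finset.sum_range_one]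

lemma iIndepFun.measureReal_sup_eq_of_pos (hW : ∀ j, Measurable (W j)) (h : iIndepFun W μ)
    (hG : ∀ j z, μ.real {ω | W j ω = z} = G z) {x : ℕ} (hx : 0 < x) :
    μ.real {ω | Finset.univ.sup (W · ω) = x}
      = (∑ z ∈ Finset.range (x + 1), G z) ^ Fintype.card ι
        - (∑ z ∈ Finset.range x, G z) ^ Fintype.card ι := by
  have := h.isProbabilityMeasure
  obtain ⟨x, rfl⟩ := Nat.exists_eq_add_of_lt hx
  rw [measureReal_eq_add_one (measurable_finset_univ_sup hW), h.measureReal_sup_le hW hG,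
    h.measureReal_sup_le hW hG]

end MaxOfIID

lemma iIndepFun.measureReal_sup_lt_sup {ι κ : Type u} [Fintype ι] [Fintype κ]
    {W : ι → Ω → ℕ} {Z : κ → Ω → ℕ} (hW : ∀ j, Measurable (W j)) (hZ : ∀ k, Measurable (Z k))
    (h : iIndepFun (Sum.elim W Z) μ) {v : ℕ} (hWv : ∀ j ω, W j ω ≤ v) :
    μ.real {ω | Finset.univ.sup (Z · ω) < Finset.univ.sup (W · ω)}
      = ∑ x ∈ Finset.range v, μ.real {ω | Finset.univ.sup (Z · ω) = x}
          * μ.real {ω | x < Finset.univ.sup (W · ω)} := by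
  have := h.isProbabilityMeasure
  refine IndepFun.measureReal_lt_eq_sum (measurable_finset_univ_sup hZ)
    (measurable_finset_univ_sup hW) ?_ fun ω => Finset.sup_le fun j _ => hWv j ω
  exact (h.indepFun_sumElim hW hZ).symm.comp
    (measurable_of_countable fun g : κ → ℕ => Finset.univ.sup g)
    (measurable_of_countable fun g : ι → ℕ => Finset.univ.sup g)

end ProbabilityTheory

lemma Fin.prod_univ_add_one_eq_prod_Icc {M : Type*} [CommMonoid M] (f : ℕ → M) (t : ℕ) :
    ∏ u : Fin t, f (u + 1) = ∏ u ∈ Finset.Icc 1 t, f u := by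
  rw [Fin.prod_univ_eq_prod_range (fun u => f (u + 1)), Finset.range_eq_Ico,
    Finset.prod_Ico_add' f, zero_add, Finset.Ico_add_one_right_eq_Icc]

theorem bfmax_dfr_formula_general (t v n : ℕ)
    {Ω : Type*} [MeasurableSpace Ω] (μ : Measure Ω) [IsProbabilityMeasure μ]
    (X : ∀ u : Fin t, Fin (u.val + 1) → Ω → ℕ)
    (Y : ∀ u : Fin t, Fin (n - (u.val + 1)) → Ω → ℕ)
    (hXmeas : ∀ u j, Measurable (X u j)) (hYmeas : ∀ u k, Measurable (Y u k))
    (hXval : ∀ u j ω, X u j ω ≤ v)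
    (hindep : iIndepFun
      (fun p : Σ u : Fin t, (Fin (u.val + 1) ⊕ Fin (n - (u.val + 1))) =>
        Sum.elim (X p.1) (Y p.1) p.2) μ)
    (g1 g0 : ℕ → ℕ → ℝ)
    (hXdist : ∀ (u : Fin t) j z, (μ {ω | X u j ω = z}).toReal = g1 (u.val + 1) z)
    (hYdist : ∀ (u : Fin t) k z, (μ {ω | Y u k ω = z}).toReal = g0 (u.val + 1) z)
    (f1 f0 : ℕ → ℕ → ℝ)
    (hf1 : ∀ u x, f1 u x = 1 - (∑ z ∈ Finset.range (x + 1), g1 u z) ^ u)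
    (hf00 : ∀ u, f0 u 0 = g0 u 0 ^ (n - u))
    (hf0 : ∀ u x, 1 ≤ x → f0 u x = (∑ z ∈ Finset.range (x + 1), g0 u z) ^ (n - u)
        - (∑ z ∈ Finset.range x, g0 u z) ^ (n - u)) :
    ((μ {ω | ∀ u : Fin t,
        Finset.univ.sup (fun k => Y u k ω) < Finset.univ.sup (fun j => X u j ω)}).toReal
      = ∏ u ∈ Finset.Icc 1 t, ∑ x ∈ Finset.range v, f1 u x * f0 u x)
    ∧ ((μ {ω | ¬ ∀ u : Fin t,
        Finset.univ.sup (fun k => Y u k ω) < Finset.univ.sup (fun j => X u j ω)}).toReal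
      = 1 - ∏ u ∈ Finset.Icc 1 t, ∑ x ∈ Finset.range v, f1 u x * f0 u x) := by
  have hfactor (u : Fin t) :
      μ.real {ω | Finset.univ.sup (fun k => Y u k ω) < Finset.univ.sup (fun j => X u j ω)}
        = ∑ x ∈ Finset.range v, f1 (u + 1) x * f0 (u + 1) x := by
    have hu : iIndepFun (Sum.elim (X u) (Y u)) μ :=
      hindep.precomp (g := Sigma.mk u) sigma_mk_injective
    have hXu : iIndepFun (X u) μ := hu.precomp (g := Sum.inl) Sum.inl_injective
    have hYu : iIndepFun (Y u) μ := hu.precomp (g := Sum.inr) Sum.inr_injective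
    rw [hu.measureReal_sup_lt_sup (hXmeas u) (hYmeas u) (hXval u)]
    refine Finset.sum_congr rfl fun x _ => ?_
    rw [hXu.measureReal_lt_sup (hXmeas u) (hXdist u), hf1, mul_comm, Fintype.card_fin]
    rcases Nat.eq_zero_or_pos x with rfl | hx
    · rw [hYu.measureReal_sup_eq_zero (hYmeas u) (hYdist u), hf00, Fintype.card_fin]
    · rw [hYu.measureReal_sup_eq_of_pos (hYmeas u) (hYdist u) hx, hf0 _ _ hx, Fintype.card_fin]
  have hblocks : iIndepFun (fun u ω p => Sum.elim (X u) (Y u) p ω) μ :=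
    hindep.iIndepFun_curry (X := fun u => Sum.elim (X u) (Y u))
      fun u => Sum.rec (hXmeas u) (hYmeas u)
  have hsuccess : μ.real {ω | ∀ u : Fin t,
      Finset.univ.sup (fun k => Y u k ω) < Finset.univ.sup (fun j => X u j ω)}
        = ∏ u ∈ Finset.Icc 1 t, ∑ x ∈ Finset.range v, f1 u x * f0 u x := by
    have hprod := hblocks.measure_setOf_forall
      (P := fun _ g =>
        Finset.univ.sup (fun k => g (.inr k)) < Finset.univ.sup (fun j => g (.inl j)))
      fun _ => (Set.to_countable _).measurableSet
    simp only [Sum.elim_inl, Sum.elim_inr] at hprod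
    rw [measureReal_def, hprod, ENNReal.toReal_prod]
    simp_rw [← measureReal_def, hfactor]
    exact Fin.prod_univ_add_one_eq_prod_Icc (fun u => ∑ x ∈ Finset.range v, f1 u x * f0 u x) t
  have hmeas : MeasurableSet {ω | ∀ u : Fin t,
      Finset.univ.sup (fun k => Y u k ω) < Finset.univ.sup (fun j => X u j ω)} := by
    rw [Set.ofPred_forall]
    exact .iInter fun u => measurableSet_lt (measurable_finset_univ_sup (hYmeas u))
      (measurable_finset_univ_sup (hXmeas u))
  exact ⟨hsuccess, (probReal_compl_eq_one_sub hmeas).trans (congrArg _ hsuccess)⟩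

/-- the full DFR formula of Proposition 3. For each residual error count
`u ∈ {1,…,t}` (encoded by `u : Fin t`, with actual value `u.val + 1`), the counters of the
`u` erroneous positions are iid Binomial(v, ρ₁(u)) and those of the `n−u` error-free
positions are iid Binomial(v, ρ₀(u)); the whole family is mutually independent. Then the
success probability is `∏_{u=1}^{t} Σ_{x=0}^{v−1} f₁⁽ᵘ⁾(x)·f₀⁽ᵘ⁾(x)` and the failure
probability is one minus this product. -/
theorem bfmax_dfr_formula (t v n : ℕ) (ht : 1 ≤ t) (hv : 1 ≤ v) (hn : t < n)
    (ρ1 ρ0 : ℕ → ℝ)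
    (hρ1 : ∀ u, 1 ≤ u → u ≤ t → 0 ≤ ρ1 u ∧ ρ1 u ≤ 1)
    (hρ0 : ∀ u, 1 ≤ u → u ≤ t → 0 ≤ ρ0 u ∧ ρ0 u ≤ 1)
    {Ω : Type*} [MeasurableSpace Ω] (μ : Measure Ω) [IsProbabilityMeasure μ]
    (X : ∀ u : Fin t, Fin (u.val + 1) → Ω → ℕ)
    (Y : ∀ u : Fin t, Fin (n - (u.val + 1)) → Ω → ℕ)
    (hXmeas : ∀ u j, Measurable (X u j)) (hYmeas : ∀ u k, Measurable (Y u k))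
    (hXval : ∀ u j ω, X u j ω ≤ v) (hYval : ∀ u k ω, Y u k ω ≤ v)
    (hindep : iIndepFun
      (fun p : Σ u : Fin t, (Fin (u.val + 1) ⊕ Fin (n - (u.val + 1))) =>
        Sum.elim (X p.1) (Y p.1) p.2) μ)
    (g1 g0 : ℕ → ℕ → ℝ)
    (hg1 : ∀ u z, g1 u z = (Nat.choose v z : ℝ) * ρ1 u ^ z * (1 - ρ1 u) ^ (v - z))
    (hg0 : ∀ u z, g0 u z = (Nat.choose v z : ℝ) * ρ0 u ^ z * (1 - ρ0 u) ^ (v - z))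
    (hXdist : ∀ (u : Fin t) j z, (μ {ω | X u j ω = z}).toReal = g1 (u.val + 1) z)
    (hYdist : ∀ (u : Fin t) k z, (μ {ω | Y u k ω = z}).toReal = g0 (u.val + 1) z)
    (f1 f0 : ℕ → ℕ → ℝ)
    (hf1 : ∀ u x, f1 u x = 1 - (∑ z ∈ Finset.range (x + 1), g1 u z) ^ u)
    (hf00 : ∀ u, f0 u 0 = g0 u 0 ^ (n - u))
    (hf0 : ∀ u x, 1 ≤ x → f0 u x = (∑ z ∈ Finset.range (x + 1), g0 u z) ^ (n - u)
        - (∑ z ∈ Finset.range x, g0 u z) ^ (n - u)) :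
    ((μ {ω | ∀ u : Fin t,
        Finset.univ.sup (fun k => Y u k ω) < Finset.univ.sup (fun j => X u j ω)}).toReal
      = ∏ u ∈ Finset.Icc 1 t, ∑ x ∈ Finset.range v, f1 u x * f0 u x)
    ∧ ((μ {ω | ¬ ∀ u : Fin t,
        Finset.univ.sup (fun k => Y u k ω) < Finset.univ.sup (fun j => X u j ω)}).toReal
      = 1 - ∏ u ∈ Finset.Icc 1 t, ∑ x ∈ Finset.range v, f1 u x * f0 u x) :=
  bfmax_dfr_formula_general t v n μ X Y hXmeas hYmeas hXval hindep g1 g0 hXdist hYdist f1 f0 hf1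
    hf00 hf0
end
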